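/- arXiv:1905.12257 — 2 statements merged into one kernel-verified Lean document; each statement's English description precedes it below -/
import Mathlib

section
/- Let Z be a real Banach space with dim Z ≥ 2. Then there exists u ∈ S_Z with n(Z,u) = 0; that is, 0 belongs to the set N(Z) = { n(Z,u) : u ∈ S_Z }. -/
/-!
Take a two-dimensional subspace `Y` of `Z` and, by Rademacher's theorem, a point `x ≠ 0` of `Y`
at which the norm of `Y` is differentiable. Every functional of norm one on `Z` that norms `x`
restricts on `Y` to the derivative of the norm at `x`, so all of them vanish on a nonzero `z`
in the kernel of that derivative. Hence, with `u := x / ‖x‖`, `v(Z, u, z / ‖z‖) = 0` and so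
`n(Z, u) = 0`.
-/

open NormedSpace

/-- Numerical radius of `z` with respect to the unit vector `u`. -/
noncomputable def vRad {Z : Type*} [NormedAddCommGroup Z] [NormedSpace ℝ Z] (u z : Z) : ℝ :=
  sSup {r : ℝ | ∃ φ : StrongDual ℝ Z, ‖φ‖ = 1 ∧ φ u = 1 ∧ |φ z| = r}

/-- Numerical index of the space with respect to the unit vector `u`. -/
noncomputable def nInd {Z : Type*} [NormedAddCommGroup Z] [NormedSpace ℝ Z] (u : Z) : ℝ :=
  sInf {r : ℝ | ∃ z : Z, ‖z‖ = 1 ∧ vRad u z = r}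

section NumericalIndex

variable {E : Type*} [NormedAddCommGroup E] [NormedSpace ℝ E]

lemma vRad_nonneg (u z : E) : 0 ≤ vRad u z :=
  Real.sSup_nonneg <| by rintro _ ⟨φ, -, -, rfl⟩; exact abs_nonneg _

lemma vRad_eq_zero_of_forall_apply_eq_zero {u z : E}
    (h : ∀ φ : StrongDual ℝ E, ‖φ‖ = 1 → φ u = 1 → φ z = 0) : vRad u z = 0 :=
  le_antisymm
    (Real.sSup_nonpos <| by rintro _ ⟨φ, hφ, hφu, rfl⟩; simp [h φ hφ hφu])
    (vRad_nonneg u z)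

lemma nInd_eq_zero_of_vRad_eq_zero {u z : E} (hz : ‖z‖ = 1) (h : vRad u z = 0) : nInd u = 0 :=
  le_antisymm (Real.sInf_nonpos' ⟨0, ⟨z, hz, h⟩, le_rfl⟩)
    (Real.sInf_nonneg <| by rintro _ ⟨z, -, rfl⟩; exact vRad_nonneg u z)

end NumericalIndex

section SmoothPoint

variable {E : Type*} [NormedAddCommGroup E] [NormedSpace ℝ E]

lemma eq_fderiv_norm_of_le_norm {x : E} (hx : DifferentiableAt ℝ (‖·‖) x) {ψ : StrongDual ℝ E}
    (hle : ∀ y, ψ y ≤ ‖y‖) (hψx : ψ x = ‖x‖) : ψ = fderiv ℝ (‖·‖) x := by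
  have hmin : IsLocalMin (fun y ↦ ‖y‖ - ψ y) x :=
    Filter.Eventually.of_forall fun y ↦ by simpa [hψx] using hle y
  have h := hmin.fderiv_eq_zero
  rw [fderiv_fun_sub hx ψ.differentiableAt, ψ.fderiv, sub_eq_zero] at h
  exact h.symm

lemma comp_subtypeL_eq_fderiv_norm {Y : Submodule ℝ E} {x : Y}
    (hx : DifferentiableAt ℝ (‖·‖) x) {φ : StrongDual ℝ E} (hφ : ‖φ‖ ≤ 1) (hφx : φ x = ‖x‖) :
    φ.comp Y.subtypeL = fderiv ℝ (‖·‖) x := by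
  refine eq_fderiv_norm_of_le_norm hx (fun y ↦ ?_) hφx
  calc φ y ≤ ‖φ‖ * ‖(y : E)‖ := (le_abs_self _).trans (φ.le_opNorm _)
    _ ≤ ‖y‖ := mul_le_of_le_one_left (norm_nonneg _) hφ

lemma exists_differentiableAt_norm_fderiv_apply_eq_zero [FiniteDimensional ℝ E]
    (hE : 2 ≤ Module.finrank ℝ E) :
    ∃ x z : E, DifferentiableAt ℝ (‖·‖) x ∧ z ≠ 0 ∧ fderiv ℝ (‖·‖) x z = 0 := by
  have : Nontrivial E := Module.nontrivial_of_finrank_pos (R := ℝ) (by omega)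
  obtain ⟨x, hx⟩ := (dense_differentiableAt_norm (E := E)).nonempty
  have hker : LinearMap.ker (fderiv ℝ (‖·‖) x : E →ₗ[ℝ] ℝ) ≠ ⊥ :=
    LinearMap.ker_ne_bot_of_finrank_lt (by rw [Module.finrank_self]; omega)
  obtain ⟨z, hz, hz0⟩ := Submodule.exists_mem_ne_zero_of_ne_bot hker
  exact ⟨x, z, hx, hz0, hz⟩

end SmoothPoint

lemma exists_finiteDimensional_submodule_finrank_eq_two {E : Type*} [AddCommGroup E]
    [Module ℝ E] (h : 2 ≤ Module.rank ℝ E) :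
    ∃ Y : Submodule ℝ E, FiniteDimensional ℝ Y ∧ Module.finrank ℝ Y = 2 := by
  obtain ⟨v, hv⟩ := Module.le_rank_iff.mp h
  exact ⟨Submodule.span ℝ (Set.range v), FiniteDimensional.span_of_finite ℝ (Set.finite_range v),
    by simpa using finrank_span_eq_card hv⟩

lemma exists_unit_forall_norming_apply_eq_zero {E : Type*} [NormedAddCommGroup E]
    [NormedSpace ℝ E] (h : 2 ≤ Module.rank ℝ E) :
    ∃ u z : E, ‖u‖ = 1 ∧ ‖z‖ = 1 ∧ ∀ φ : StrongDual ℝ E, ‖φ‖ = 1 → φ u = 1 → φ z = 0 := by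
  obtain ⟨Y, _, hY⟩ := exists_finiteDimensional_submodule_finrank_eq_two h
  obtain ⟨x, z, hx, hz, hxz⟩ := exists_differentiableAt_norm_fderiv_apply_eq_zero (E := Y) hY.ge
  have : Nontrivial Y := Module.nontrivial_of_finrank_pos (R := ℝ) (by omega)
  have hx0 : (x : E) ≠ 0 := by
    rintro hx0
    rw [ZeroMemClass.coe_eq_zero.mp hx0] at hx
    exact not_differentiableAt_norm_zero Y hx
  have hz0 : (z : E) ≠ 0 := by simpa using hz
  refine ⟨‖(x : E)‖⁻¹ • (x : E), ‖(z : E)‖⁻¹ • (z : E), norm_smul_inv_norm hx0,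
    norm_smul_inv_norm hz0, fun φ hφ hφu ↦ ?_⟩
  have hφx : φ x = ‖x‖ := by
    rw [map_smul, smul_eq_mul, inv_mul_eq_one₀ (norm_ne_zero_iff.mpr hx0)] at hφu
    exact hφu.symm
  have hφY := comp_subtypeL_eq_fderiv_norm hx hφ.le hφx
  have : φ z = 0 := by rw [← hxz, ← hφY]; rfl
  simp [this]

theorem stmt6_general {Z : Type*} [NormedAddCommGroup Z] [NormedSpace ℝ Z]
    (hdim : 2 ≤ Module.rank ℝ Z) :
    ∃ u : Z, ‖u‖ = 1 ∧ nInd u = 0 := by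
  obtain ⟨u, z, hu, hz, hkill⟩ := exists_unit_forall_norming_apply_eq_zero hdim
  exact ⟨u, hu, nInd_eq_zero_of_vRad_eq_zero hz (vRad_eq_zero_of_forall_apply_eq_zero hkill)⟩

theorem stmt6 {Z : Type*} [NormedAddCommGroup Z] [NormedSpace ℝ Z] [CompleteSpace Z]
    (hdim : 2 ≤ Module.rank ℝ Z) :
    ∃ u : Z, ‖u‖ = 1 ∧ nInd u = 0 :=
  stmt6_general hdim
end

section
/- Let X, Y be Banach spaces, G ∈ L(X,Y) a norm-one operator, Z a closed subspace of Y containing the range of G, and Ḡ : X → Z the astriction of G. Then n_G(X,Y) ≤ n_{Ḡ}(X,Z). Moreover the inequality can be strict: for G : ℝ → ℝ ⊕_∞ ℝ given by G(x) = (x, 0) one has n_G = 0 while the astriction Ḡ : ℝ → ℝ is the identity with n_{Ḡ} = 1. -/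
open NormedSpace

lemma vRad_nonneg_s18 {Z : Type*} [NormedAddCommGroup Z] [NormedSpace ℝ Z] (u z : Z) :
    0 ≤ vRad u z :=
  Real.sSup_nonneg fun r ⟨_, _, _, h⟩ => h ▸ abs_nonneg _

lemma vRad_bdd {Z : Type*} [NormedAddCommGroup Z] [NormedSpace ℝ Z] (u z : Z) :
    BddAbove {r : ℝ | ∃ φ : StrongDual ℝ Z, ‖φ‖ = 1 ∧ φ u = 1 ∧ |φ z| = r} := by
  refine ⟨‖z‖, ?_⟩
  rintro r ⟨φ, hφ, -, rfl⟩
  calc |φ z| = ‖φ z‖ := (Real.norm_eq_abs _).symm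
    _ ≤ ‖φ‖ * ‖z‖ := φ.le_opNorm z
    _ = ‖z‖ := by rw [hφ, one_mul]

lemma nInd_bddBelow {Z : Type*} [NormedAddCommGroup Z] [NormedSpace ℝ Z] (u : Z) :
    BddBelow {r : ℝ | ∃ z : Z, ‖z‖ = 1 ∧ vRad u z = r} :=
  ⟨0, fun r ⟨z, _, hz⟩ => hz ▸ vRad_nonneg_s18 u z⟩

lemma dual_norm_eq_one_aux {W : Type*} [NormedAddCommGroup W] [NormedSpace ℝ W]
    (φ : StrongDual ℝ W) (Gb : W) (hGbnorm : ‖Gb‖ = 1) (hφGb : φ Gb = 1)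
    (hφle : ∀ S : W, ‖φ S‖ ≤ ‖S‖) : ‖φ‖ = 1 := by
  refine le_antisymm (ContinuousLinearMap.opNorm_le_bound φ zero_le_one
    fun S => by rw [one_mul]; exact hφle S) ?_
  have : (1 : ℝ) = ‖φ Gb‖ := by rw [hφGb]; simp
  calc (1 : ℝ) = ‖φ Gb‖ := this
    _ ≤ ‖φ‖ * ‖Gb‖ := φ.le_opNorm _
    _ = ‖φ‖ := by rw [hGbnorm, mul_one]

set_option maxHeartbeats 1000000 in
set_option synthInstance.maxHeartbeats 1000000 in
theorem stmt18 {X Y : Type*} [NormedAddCommGroup X] [NormedSpace ℝ X] [CompleteSpace X]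
    [NormedAddCommGroup Y] [NormedSpace ℝ Y] [CompleteSpace Y]
    (G : X →L[ℝ] Y) (hG : ‖G‖ = 1) (Z : Submodule ℝ Y) (hZ : IsClosed (Z : Set Y))
    (hrange : ∀ x : X, G x ∈ Z) :
    nInd G ≤ nInd (G.codRestrict Z hrange)
      ∧ (nInd (ContinuousLinearMap.inl ℝ ℝ ℝ) = 0
          ∧ nInd (ContinuousLinearMap.id ℝ ℝ) = 1) := by
  refine ⟨?_, ?_, ?_⟩
  · -- Part 1
    set Gb := G.codRestrict Z hrange with hGb
    -- composition with the isometric inclusion preserves norms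
    have hJ : ∀ T : X →L[ℝ] ↥Z, ‖Z.subtypeL.comp T‖ = ‖T‖ := by
      intro T
      refine le_antisymm ?_ ?_
      · refine ContinuousLinearMap.opNorm_le_bound _ (norm_nonneg T) fun x => ?_
        simpa using T.le_opNorm x
      · refine ContinuousLinearMap.opNorm_le_bound _ (norm_nonneg _) fun x => ?_
        have : ‖T x‖ = ‖(Z.subtypeL.comp T) x‖ := by simp
        rw [this]
        exact (Z.subtypeL.comp T).le_opNorm x
    have hJG : Z.subtypeL.comp Gb = G := by ext x; rfl
    have hGbnorm : ‖Gb‖ = 1 := by rw [← hJ Gb, hJG, hG]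
    refine le_csInf ⟨vRad Gb Gb, Gb, hGbnorm, rfl⟩ ?_
    rintro b ⟨T, hT, rfl⟩
    have key : vRad G (Z.subtypeL.comp T) ≤ vRad Gb T := by
      refine Real.sSup_le ?_ (vRad_nonneg_s18 _ _)
      rintro r ⟨Φ, hΦ, hΦG, rfl⟩
      set J : (X →L[ℝ] ↥Z) →L[ℝ] (X →L[ℝ] Y) :=
        ContinuousLinearMap.compL ℝ X (↥Z) Y Z.subtypeL with hJdef
      have hJapp : ∀ S : X →L[ℝ] ↥Z, J S = Z.subtypeL.comp S := fun S => rfl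
      set φ : StrongDual ℝ (X →L[ℝ] ↥Z) := Φ.comp J with hφdef
      have hφGb : φ Gb = 1 := by
        show Φ (J Gb) = 1
        rw [hJapp, hJG]; exact hΦG
      have hφle : ∀ S : X →L[ℝ] ↥Z, ‖φ S‖ ≤ ‖S‖ := by
        intro S
        calc ‖Φ (J S)‖ ≤ ‖Φ‖ * ‖J S‖ := Φ.le_opNorm _
          _ = ‖S‖ := by rw [hΦ, one_mul, hJapp, hJ]
      have hφnorm := dual_norm_eq_one_aux φ Gb hGbnorm hφGb hφle
      refine le_csSup (vRad_bdd Gb T) ⟨φ, hφnorm, hφGb, rfl⟩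
    calc nInd G ≤ vRad G (Z.subtypeL.comp T) :=
          csInf_le (nInd_bddBelow G) ⟨Z.subtypeL.comp T, by rw [hJ]; exact hT, rfl⟩
      _ ≤ vRad Gb T := key
  · -- Part 2: nInd inl = 0
    set u := ContinuousLinearMap.inl ℝ ℝ ℝ with hu
    set w := ContinuousLinearMap.inr ℝ ℝ ℝ with hw
    have hunorm : ‖u‖ = 1 := by
      refine le_antisymm (ContinuousLinearMap.opNorm_le_bound _ zero_le_one fun x => ?_) ?_
      · simp [hu, Prod.norm_def]
      · have : ‖u 1‖ ≤ ‖u‖ * ‖(1:ℝ)‖ := u.le_opNorm 1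
        simpa [hu, Prod.norm_def] using this
    have hwnorm : ‖w‖ = 1 := by
      refine le_antisymm (ContinuousLinearMap.opNorm_le_bound _ zero_le_one fun x => ?_) ?_
      · simp [hw, Prod.norm_def]
      · have : ‖w 1‖ ≤ ‖w‖ * ‖(1:ℝ)‖ := w.le_opNorm 1
        simpa [hw, Prod.norm_def] using this
    have hsum : ‖u + w‖ ≤ 1 := by
      refine ContinuousLinearMap.opNorm_le_bound _ zero_le_one fun x => ?_
      simp [hu, hw, Prod.norm_def]
    have hdiff : ‖u - w‖ ≤ 1 := by
      refine ContinuousLinearMap.opNorm_le_bound _ zero_le_one fun x => ?_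
      simp [hu, hw, Prod.norm_def]
    have hv : vRad u w = 0 := by
      refine le_antisymm (Real.sSup_le ?_ le_rfl) (vRad_nonneg_s18 _ _)
      rintro r ⟨φ, hφ, hφu, rfl⟩
      have h1 : |φ (u + w)| ≤ 1 := by
        calc |φ (u + w)| = ‖φ (u + w)‖ := (Real.norm_eq_abs _).symm
          _ ≤ ‖φ‖ * ‖u + w‖ := φ.le_opNorm _
          _ ≤ 1 := by rw [hφ, one_mul]; exact hsum
      have h2 : |φ (u - w)| ≤ 1 := by
        calc |φ (u - w)| = ‖φ (u - w)‖ := (Real.norm_eq_abs _).symm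
          _ ≤ ‖φ‖ * ‖u - w‖ := φ.le_opNorm _
          _ ≤ 1 := by rw [hφ, one_mul]; exact hdiff
      rw [map_add, hφu] at h1
      rw [map_sub, hφu] at h2
      have := abs_le.mp h1
      have := abs_le.mp h2
      have : φ w = 0 := by
        rcases abs_le.mp h1 with ⟨_, ha⟩
        rcases abs_le.mp h2 with ⟨_, hb⟩
        linarith
      simp [this]
    refine le_antisymm (csInf_le (nInd_bddBelow u) ⟨w, hwnorm, hv⟩) ?_
    exact Real.sInf_nonneg fun r ⟨z, _, hz⟩ => hz ▸ vRad_nonneg_s18 u z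
  · -- Part 3: nInd id = 1
    set e := ContinuousLinearMap.id ℝ ℝ with he
    have henorm : ‖e‖ = 1 := ContinuousLinearMap.norm_id
    have hene : e ≠ 0 := by
      intro h
      have : (1 : ℝ) = 0 := by
        calc (1 : ℝ) = e 1 := rfl
          _ = (0 : ℝ →L[ℝ] ℝ) 1 := by rw [h]
          _ = 0 := rfl
      exact one_ne_zero this
    have hzrep : ∀ z : ℝ →L[ℝ] ℝ, z = z 1 • e := by
      intro z
      ext
      simp [he]
    have hz1 : ∀ z : ℝ →L[ℝ] ℝ, ‖z‖ = 1 → |z 1| = 1 := by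
      intro z hz
      refine le_antisymm ?_ ?_
      · have : ‖z 1‖ ≤ ‖z‖ * ‖(1:ℝ)‖ := z.le_opNorm 1
        simpa [hz] using this
      · have hle : ‖z‖ ≤ |z 1| := by
          refine ContinuousLinearMap.opNorm_le_bound _ (abs_nonneg _) fun x => ?_
          have : z x = x * z 1 := by
            conv_lhs => rw [hzrep z]
            simp [he, smul_eq_mul, mul_comm]
          rw [this, Real.norm_eq_abs, abs_mul, Real.norm_eq_abs, mul_comm]
        rw [← hz] at *
        linarith [hle]
    have hvr : ∀ z : ℝ →L[ℝ] ℝ, ‖z‖ = 1 → vRad e z = 1 := by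
      intro z hz
      have hval : ∀ φ : StrongDual ℝ (ℝ →L[ℝ] ℝ), φ e = 1 → |φ z| = 1 := by
        intro φ hφe
        have : φ z = z 1 * φ e := by
          conv_lhs => rw [hzrep z]
          rw [map_smul, smul_eq_mul]
        rw [this, hφe, mul_one]
        exact hz1 z hz
      obtain ⟨g, hg1, hg2⟩ := exists_dual_vector ℝ e (norm_ne_zero_iff.mpr hene)
      rw [henorm] at hg2
      refine le_antisymm (Real.sSup_le ?_ zero_le_one) ?_
      · rintro r ⟨φ, -, hφe, rfl⟩
        exact le_of_eq (hval φ hφe)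
      · exact le_csSup (vRad_bdd e z) ⟨g, hg1, hg2, hval g hg2⟩
    refine le_antisymm (csInf_le (nInd_bddBelow e) ⟨e, henorm, hvr e henorm⟩) ?_
    refine le_csInf ⟨1, e, henorm, hvr e henorm⟩ ?_
    rintro b ⟨z, hz, rfl⟩
    exact le_of_eq (hvr z hz).symm
end
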